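/- The infimum of the transition energy ∫₀^∞ ((f(t)−1)² + (f''(t))²) dt, taken over all twice continuously differentiable functions f : ℝ → ℝ with f(0) = 0, f'(0) = 0, and such that there exists M > 0 with f(t) = 1 for all t > M, equals √2. -/

import Mathlib

/-!
Write `u = f - 1`. Completing the square and integrating `2 u u''` by parts gives the pointwise
identity `u² + u''² = (u'' + √2 u' + u)² - V'` with `V = 2 u u' + √2 (u² + u'²)`. For an
admissible `f` the boundary terms are `V(0) = √2` and `V(M) = 0`, so its energy is `√2` plus
the integral of a square. That square vanishes for the solution
`u = -e^{-t/√2} (cos (t/√2) + sin (t/√2))` of `u'' + √2 u' + u = 0` with `u(0) = -1`,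
`u'(0) = 0`; cutting it off on `[n, n + 1]` leaves a residual of size `O(e^{-n/√2})`, so the
energies of the cut-off profiles tend to `√2`.
-/

open MeasureTheory Real Set Filter Topology

theorem ContDiff.continuous_deriv_deriv {f : ℝ → ℝ} (hf : ContDiff ℝ 2 f) :
    Continuous (deriv (deriv f)) :=
  (hf.deriv' (n := 1)).continuous_deriv le_rfl

theorem deriv_eqOn_zero_of_eqOn_const {f : ℝ → ℝ} {s : Set ℝ} {c : ℝ} (hs : IsOpen s)
    (h : EqOn f (fun _ ↦ c) s) : EqOn (deriv f) 0 s := fun x hx ↦ by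
  rw [Pi.zero_apply, (eventuallyEq_of_mem (hs.mem_nhds hx) h).deriv_eq, deriv_const]

theorem setIntegral_Ioi_eq_intervalIntegral {g : ℝ → ℝ} {a b : ℝ} (hab : a ≤ b)
    (h : ∀ t > b, g t = 0) : ∫ t in Ioi a, g t = ∫ t in a..b, g t := by
  rw [intervalIntegral.integral_of_le hab]
  refine setIntegral_eq_of_subset_of_forall_sdiff_eq_zero measurableSet_Ioi
    Ioc_subset_Ioi_self fun t ht ↦ h t ?_
  exact not_le.1 fun hle ↦ ht.2 ⟨ht.1, hle⟩

theorem csInf_eq_of_forall_le_of_tendsto {α : Type*} [ConditionallyCompleteLinearOrder α]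
    [TopologicalSpace α] [OrderTopology α] {s : Set α} {a : α} {u : ℕ → α}
    (hlower : ∀ x ∈ s, a ≤ x) (hmem : ∀ n, u n ∈ s) (hlim : Tendsto u atTop (𝓝 a)) :
    sInf s = a :=
  (isGLB_of_mem_closure hlower (mem_closure_of_tendsto hlim (Eventually.of_forall hmem))).csInf_eq
    ⟨_, hmem 0⟩

theorem deriv_one_add_mul {g χ : ℝ → ℝ} (hg : Differentiable ℝ g)
    (hχ : Differentiable ℝ χ) :
    deriv (fun s ↦ 1 + g s * χ s) = fun s ↦ deriv g s * χ s + g s * deriv χ s :=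
  funext fun s ↦ (((hg s).hasDerivAt.fun_mul (hχ s).hasDerivAt).const_add 1).deriv

namespace OptimalProfile

noncomputable def transitionEnergy (f : ℝ → ℝ) : ℝ :=
  ∫ t in Ioi 0, ((f t - 1) ^ 2 + (deriv (deriv f) t) ^ 2)

noncomputable def residual (f : ℝ → ℝ) (t : ℝ) : ℝ :=
  deriv (deriv f) t + √2 * deriv f t + (f t - 1)

noncomputable def flux (f : ℝ → ℝ) (t : ℝ) : ℝ :=
  2 * (f t - 1) * deriv f t + √2 * ((f t - 1) ^ 2 + (deriv f t) ^ 2)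

theorem hasDerivAt_flux {f : ℝ → ℝ} (hf : ContDiff ℝ 2 f) (t : ℝ) :
    HasDerivAt (flux f)
      (residual f t ^ 2 - ((f t - 1) ^ 2 + (deriv (deriv f) t) ^ 2)) t := by
  have h₁ := ((hf.differentiable two_ne_zero) t).hasDerivAt
  have h₂ := (hf.differentiable_deriv_two t).hasDerivAt
  have := (((h₁.sub_const 1).const_mul 2).fun_mul h₂).fun_add
    ((((h₁.sub_const 1).fun_pow 2).fun_add (h₂.fun_pow 2)).const_mul √2)
  refine this.congr_deriv ?_
  simp only [residual]
  linear_combination -(deriv f t) ^ 2 * sq_sqrt (zero_le_two (α := ℝ))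

theorem transitionEnergy_eq {f : ℝ → ℝ} (hf : ContDiff ℝ 2 f) {M : ℝ} (hM : 0 ≤ M)
    (hfM : ∀ t > M, f t = 1) :
    transitionEnergy f = flux f 0 + ∫ t in Ioi 0, residual f t ^ 2 := by
  have hf₀ : EqOn f (fun _ ↦ 1) (Ioi M) := hfM
  have hf₁ : EqOn (deriv f) 0 (Ioi M) := deriv_eqOn_zero_of_eqOn_const isOpen_Ioi hf₀
  have hf₂ : EqOn (deriv (deriv f)) 0 (Ioi M) := deriv_eqOn_zero_of_eqOn_const isOpen_Ioi hf₁
  have c₀ := hf.continuous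
  have c₁ := hf.continuous_deriv one_le_two
  have c₂ := hf.continuous_deriv_deriv
  have hfluxM : flux f M = 0 := by
    have : EqOn (flux f) 0 (Ioi M) := fun t ht ↦ by simp [flux, hf₀ ht, hf₁ ht]
    exact this.closure (by unfold flux; fun_prop) continuous_const (by simp)
  have hres : Continuous fun t ↦ residual f t ^ 2 := by unfold residual; fun_prop
  have henergy : Continuous fun t ↦ (f t - 1) ^ 2 + deriv (deriv f) t ^ 2 := by fun_prop
  have hFTC := intervalIntegral.integral_eq_sub_of_hasDerivAt (fun t _ ↦ hasDerivAt_flux hf t)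
    ((hres.sub henergy).intervalIntegrable 0 M)
  rw [intervalIntegral.integral_sub (hres.intervalIntegrable 0 M)
    (henergy.intervalIntegrable 0 M)] at hFTC
  rw [transitionEnergy,
    setIntegral_Ioi_eq_intervalIntegral hM fun t ht ↦ by simp [hf₀ ht, hf₂ ht],
    setIntegral_Ioi_eq_intervalIntegral hM fun t ht ↦ by
      simp [residual, hf₀ ht, hf₁ ht, hf₂ ht]]
  linarith

theorem transitionEnergy_eq_sqrt_two_add {f : ℝ → ℝ} (hf : ContDiff ℝ 2 f) (h₀ : f 0 = 0)
    (h₁ : deriv f 0 = 0) {M : ℝ} (hM : 0 ≤ M) (hfM : ∀ t > M, f t = 1) :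
    transitionEnergy f = √2 + ∫ t in Ioi 0, residual f t ^ 2 := by
  rw [transitionEnergy_eq hf hM hfM]
  simp [flux, h₀, h₁]

theorem sqrt_two_le_transitionEnergy {f : ℝ → ℝ} (hf : ContDiff ℝ 2 f) (h₀ : f 0 = 0)
    (h₁ : deriv f 0 = 0) {M : ℝ} (hM : 0 ≤ M) (hfM : ∀ t > M, f t = 1) :
    √2 ≤ transitionEnergy f := by
  rw [transitionEnergy_eq_sqrt_two_add hf h₀ h₁ hM hfM, le_add_iff_nonneg_right]
  exact setIntegral_nonneg measurableSet_Ioi fun t _ ↦ sq_nonneg _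

theorem residual_one_add_mul {g χ : ℝ → ℝ} (hg : ContDiff ℝ 2 g) (hχ : ContDiff ℝ 2 χ)
    (t : ℝ) : residual (fun s ↦ 1 + g s * χ s) t = χ t * residual (fun s ↦ 1 + g s) t
      + deriv χ t * (2 * deriv g t + √2 * g t) + deriv (deriv χ) t * g t := by
  have dg := hg.differentiable two_ne_zero
  have dχ := hχ.differentiable two_ne_zero
  have hdd := (((hg.differentiable_deriv_two t).hasDerivAt.fun_mul (dχ t).hasDerivAt).fun_add
    ((dg t).hasDerivAt.fun_mul (hχ.differentiable_deriv_two t).hasDerivAt)).deriv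
  simp only [residual, deriv_one_add_mul dg dχ, hdd, deriv_const_add']
  ring

noncomputable def dampedOscillation (t : ℝ) : ℝ :=
  -(exp (-(t / √2)) * (cos (t / √2) + sin (t / √2)))

theorem contDiff_dampedOscillation : ContDiff ℝ 2 dampedOscillation := by
  unfold dampedOscillation; fun_prop

theorem dampedOscillation_zero : dampedOscillation 0 = -1 := by simp [dampedOscillation]

theorem hasDerivAt_dampedOscillation (t : ℝ) :
    HasDerivAt dampedOscillation (√2 * (exp (-(t / √2)) * sin (t / √2))) t := by
  have hu := (hasDerivAt_id' t).div_const √2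
  refine ((hu.fun_neg.exp.fun_mul (hu.cos.fun_add hu.sin)).fun_neg).congr_deriv ?_
  field_simp
  linear_combination -sin (t / √2) * mul_self_sqrt (zero_le_two (α := ℝ))

theorem deriv_dampedOscillation :
    deriv dampedOscillation = fun t ↦ √2 * (exp (-(t / √2)) * sin (t / √2)) :=
  funext fun t ↦ (hasDerivAt_dampedOscillation t).deriv

theorem deriv_dampedOscillation_zero : deriv dampedOscillation 0 = 0 := by
  simp [deriv_dampedOscillation]

theorem residual_one_add_dampedOscillation (t : ℝ) :
    residual (fun s ↦ 1 + dampedOscillation s) t = 0 := by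
  have hu := (hasDerivAt_id' t).div_const √2
  have hdd : deriv (deriv dampedOscillation) t =
      exp (-(t / √2)) * (cos (t / √2) - sin (t / √2)) := by
    rw [deriv_dampedOscillation]
    refine ((hu.fun_neg.exp.fun_mul hu.sin).const_mul √2).deriv.trans ?_
    field_simp
    ring
  rw [residual, deriv_const_add', hdd, deriv_dampedOscillation]
  simp only [dampedOscillation]
  linear_combination exp (-(t / √2)) * sin (t / √2) * mul_self_sqrt (zero_le_two (α := ℝ))

theorem abs_dampedOscillation_le (t : ℝ) : |dampedOscillation t| ≤ 2 * exp (-(t / √2)) := by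
  rw [dampedOscillation, abs_neg, abs_mul, abs_of_pos (exp_pos _), mul_comm]
  gcongr
  linarith [abs_add_le (cos (t / √2)) (sin (t / √2)), abs_cos_le_one (t / √2),
    abs_sin_le_one (t / √2)]

theorem abs_deriv_dampedOscillation_le (t : ℝ) :
    |deriv dampedOscillation t| ≤ 2 * exp (-(t / √2)) := by
  rw [deriv_dampedOscillation, abs_mul, abs_mul, abs_of_pos (exp_pos _),
    abs_of_pos (sqrt_pos.2 zero_lt_two)]
  have hsqrt : √2 ≤ 2 := sqrt_le_iff.2 ⟨zero_le_two, by norm_num⟩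
  calc √2 * (exp (-(t / √2)) * |sin (t / √2)|) ≤ 2 * (exp (-(t / √2)) * 1) := by
        gcongr
        exact abs_sin_le_one _
    _ = 2 * exp (-(t / √2)) := by rw [mul_one]

theorem deriv_smoothTransition_eq_zero {x : ℝ} (hx : x ∉ Ioo 0 1) :
    deriv smoothTransition x = 0 ∧ deriv (deriv smoothTransition) x = 0 := by
  have hψ : ContDiff ℝ 2 smoothTransition := smoothTransition.contDiff
  have hvanish {s : Set ℝ} {c : ℝ} (hs : IsOpen s) (h : EqOn smoothTransition (fun _ ↦ c) s)
      (hxs : x ∈ closure s) :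
      deriv smoothTransition x = 0 ∧ deriv (deriv smoothTransition) x = 0 := by
    have h₁ := deriv_eqOn_zero_of_eqOn_const hs h
    have h₂ := deriv_eqOn_zero_of_eqOn_const hs h₁
    exact ⟨h₁.closure (hψ.continuous_deriv one_le_two) continuous_const hxs,
      h₂.closure hψ.continuous_deriv_deriv continuous_const hxs⟩
  rcases le_or_gt x 0 with hx₀ | hx₀
  · exact hvanish isOpen_Iio (fun y hy ↦ smoothTransition.zero_of_nonpos (le_of_lt hy))
      (by rwa [closure_Iio])
  · exact hvanish isOpen_Ioi (fun y hy ↦ smoothTransition.one_of_one_le (le_of_lt hy))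
      (by rw [closure_Ioi]; exact not_lt.1 fun h ↦ hx ⟨hx₀, h⟩)

theorem exists_bound_deriv_smoothTransition :
    ∃ C, ∀ x, |deriv smoothTransition x| + |deriv (deriv smoothTransition) x| ≤ C := by
  have hψ : ContDiff ℝ 2 smoothTransition := smoothTransition.contDiff
  have hcont :
      Continuous fun x ↦ |deriv smoothTransition x| + |deriv (deriv smoothTransition) x| :=
    ((hψ.continuous_deriv one_le_two).abs).add hψ.continuous_deriv_deriv.abs
  have hsupp : HasCompactSupport
      fun x ↦ |deriv smoothTransition x| + |deriv (deriv smoothTransition) x| :=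
    HasCompactSupport.intro isCompact_Icc fun x hx ↦ by
      obtain ⟨h₁, h₂⟩ := deriv_smoothTransition_eq_zero fun h ↦ hx (Ioo_subset_Icc_self h)
      simp [h₁, h₂]
  obtain ⟨C, hC⟩ := hcont.bounded_above_of_compact_support hsupp
  exact ⟨C, fun x ↦ (le_abs_self _).trans (hC x)⟩

theorem contDiff_smoothTransition_const_sub (a : ℝ) :
    ContDiff ℝ 2 fun s ↦ smoothTransition (a - s) :=
  smoothTransition.contDiff.comp (contDiff_const.sub contDiff_id)

noncomputable def cutoffProfile (n : ℕ) (t : ℝ) : ℝ :=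
  1 + dampedOscillation t * smoothTransition (n + 1 - t)

theorem contDiff_cutoffProfile (n : ℕ) : ContDiff ℝ 2 (cutoffProfile n) :=
  contDiff_const.add (contDiff_dampedOscillation.mul (contDiff_smoothTransition_const_sub _))

theorem cutoffProfile_zero (n : ℕ) : cutoffProfile n 0 = 0 := by
  rw [cutoffProfile, dampedOscillation_zero, sub_zero,
    smoothTransition.one_of_one_le (by linarith [n.cast_nonneg (α := ℝ)])]
  ring

theorem cutoffProfile_eq_one (n : ℕ) : ∀ t > (n : ℝ) + 1, cutoffProfile n t = 1 :=
  fun t ht ↦ by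
  rw [cutoffProfile, smoothTransition.zero_of_nonpos (by linarith), mul_zero, add_zero]

theorem residual_cutoffProfile (n : ℕ) (t : ℝ) :
    residual (cutoffProfile n) t =
      -deriv smoothTransition (n + 1 - t) *
          (2 * deriv dampedOscillation t + √2 * dampedOscillation t)
        + deriv (deriv smoothTransition) (n + 1 - t) * dampedOscillation t := by
  have hχ : deriv (fun s ↦ smoothTransition (n + 1 - s)) =
      fun s ↦ -deriv smoothTransition (n + 1 - s) :=
    funext fun s ↦ deriv_comp_const_sub ..
  unfold cutoffProfile
  rw [residual_one_add_mul contDiff_dampedOscillation (contDiff_smoothTransition_const_sub _),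
    residual_one_add_dampedOscillation, hχ, deriv.fun_neg, deriv_comp_const_sub]
  ring

theorem deriv_cutoffProfile_zero (n : ℕ) : deriv (cutoffProfile n) 0 = 0 := by
  have hψ : deriv smoothTransition (n + 1) = 0 :=
    (deriv_smoothTransition_eq_zero fun h ↦ by linarith [h.2, n.cast_nonneg (α := ℝ)]).1
  unfold cutoffProfile
  rw [deriv_one_add_mul (contDiff_dampedOscillation.differentiable two_ne_zero)
    ((contDiff_smoothTransition_const_sub _).differentiable two_ne_zero)]
  dsimp only
  rw [deriv_comp_const_sub]
  simp [deriv_dampedOscillation_zero, hψ]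

theorem residual_cutoffProfile_eq_zero (n : ℕ) {t : ℝ} (ht : t ∉ Ioo (n : ℝ) (n + 1)) :
    residual (cutoffProfile n) t = 0 := by
  obtain ⟨h₁, h₂⟩ := deriv_smoothTransition_eq_zero (x := n + 1 - t) fun h ↦
    ht ⟨by linarith [h.2], by linarith [h.1]⟩
  rw [residual_cutoffProfile, h₁, h₂]
  ring

theorem exists_abs_residual_cutoffProfile_le :
    ∃ K, 0 ≤ K ∧
      ∀ (n : ℕ) (t : ℝ), |residual (cutoffProfile n) t| ≤ K * exp (-(t / √2)) := by
  obtain ⟨C, hC⟩ := exists_bound_deriv_smoothTransition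
  have hC₀ : 0 ≤ C := (add_nonneg (abs_nonneg _) (abs_nonneg _)).trans (hC 0)
  refine ⟨8 * C, by positivity, fun n t ↦ ?_⟩
  have hsqrt : √2 ≤ 2 := sqrt_le_iff.2 ⟨zero_le_two, by norm_num⟩
  have hab := hC (n + 1 - t)
  have hg := abs_dampedOscillation_le t
  have hg' := abs_deriv_dampedOscillation_le t
  rw [residual_cutoffProfile]
  generalize deriv smoothTransition (n + 1 - t) = a at hab ⊢
  generalize deriv (deriv smoothTransition) (n + 1 - t) = b at hab ⊢
  generalize dampedOscillation t = g at hg ⊢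
  generalize deriv dampedOscillation t = g' at hg' ⊢
  have hsum : |2 * g' + √2 * g| ≤ 2 * |g'| + 2 * |g| := by
    refine (abs_add_le _ _).trans ?_
    rw [abs_mul, abs_mul, abs_two, abs_of_nonneg (sqrt_nonneg 2)]
    gcongr
  calc |-a * (2 * g' + √2 * g) + b * g| ≤ |a| * |2 * g' + √2 * g| + |b| * |g| := by
        simpa only [abs_mul, abs_neg] using abs_add_le (-a * (2 * g' + √2 * g)) (b * g)
    _ ≤ (|a| + |b|) * (2 * |g'| + 2 * |g|) := by
        nlinarith [abs_nonneg a, abs_nonneg b, abs_nonneg g, abs_nonneg g']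
    _ ≤ C * (2 * (2 * exp (-(t / √2))) + 2 * (2 * exp (-(t / √2)))) := by
        gcongr
    _ = 8 * C * exp (-(t / √2)) := by ring

theorem exists_integral_residual_cutoffProfile_sq_le :
    ∃ K, ∀ n : ℕ,
      ∫ t in Ioi 0, residual (cutoffProfile n) t ^ 2 ≤ (K * exp (-(n / √2))) ^ 2 := by
  obtain ⟨K, hK₀, hK⟩ := exists_abs_residual_cutoffProfile_le
  refine ⟨K, fun n ↦ ?_⟩
  have hn : (n : ℝ) ≤ n + 1 := by linarith
  rw [setIntegral_eq_of_subset_of_forall_sdiff_eq_zero measurableSet_Ioi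
    (Ioc_subset_Ioi_self.trans (Ioi_subset_Ioi n.cast_nonneg)) fun t ht ↦ by
      rw [residual_cutoffProfile_eq_zero n fun h ↦ ht.2 (Ioo_subset_Ioc_self h),
        zero_pow two_ne_zero],
    ← intervalIntegral.integral_of_le hn]
  have hbound : ∀ t ∈ uIoc (n : ℝ) (n + 1),
      ‖residual (cutoffProfile n) t ^ 2‖ ≤ (K * exp (-(n / √2))) ^ 2 := by
    intro t ht
    rw [uIoc_of_le hn] at ht
    rw [norm_pow, Real.norm_eq_abs]
    gcongr
    refine (hK n t).trans ?_
    gcongr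
    exact ht.1.le
  simpa using (le_abs_self _).trans (intervalIntegral.norm_integral_le_of_norm_le_const hbound)

theorem tendsto_transitionEnergy_cutoffProfile :
    Tendsto (fun n : ℕ ↦ transitionEnergy (cutoffProfile n)) atTop (𝓝 √2) := by
  obtain ⟨K, hK⟩ := exists_integral_residual_cutoffProfile_sq_le
  have henergy (n : ℕ) := transitionEnergy_eq_sqrt_two_add (contDiff_cutoffProfile n)
    (cutoffProfile_zero n) (deriv_cutoffProfile_zero n) (by positivity) (cutoffProfile_eq_one n)
  have hdecay : Tendsto (fun n : ℕ ↦ √2 + (K * exp (-(n / √2))) ^ 2) atTop (𝓝 √2) := by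
    have := tendsto_exp_neg_atTop_nhds_zero.comp
      (tendsto_natCast_atTop_atTop.atTop_div_const (sqrt_pos.2 zero_lt_two))
    simpa using tendsto_const_nhds.add ((this.const_mul K).pow 2)
  refine tendsto_of_tendsto_of_tendsto_of_le_of_le tendsto_const_nhds hdecay
    (fun n ↦ ?_) fun n ↦ ?_
  · rw [henergy n, le_add_iff_nonneg_right]
    exact setIntegral_nonneg measurableSet_Ioi fun t _ ↦ sq_nonneg _
  · linarith [henergy n, hK n]

end OptimalProfile

open OptimalProfile

theorem optimal_profile_infimum :
    sInf { E : ℝ | ∃ f : ℝ → ℝ, ContDiff ℝ 2 f ∧ f 0 = 0 ∧ deriv f 0 = 0 ∧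
        (∃ M > (0 : ℝ), ∀ t > M, f t = 1) ∧
        E = ∫ t in Set.Ioi (0 : ℝ),
          ((f t - 1) ^ 2 + (deriv (deriv f) t) ^ 2) } = Real.sqrt 2 := by
  refine csInf_eq_of_forall_le_of_tendsto ?_ (fun n ↦ ?_) tendsto_transitionEnergy_cutoffProfile
  · rintro E ⟨f, hf, h₀, h₁, ⟨M, hM, hfM⟩, rfl⟩
    exact sqrt_two_le_transitionEnergy hf h₀ h₁ hM.le hfM
  · exact ⟨cutoffProfile n, contDiff_cutoffProfile n, cutoffProfile_zero n,
      deriv_cutoffProfile_zero n, ⟨n + 1, by positivity, cutoffProfile_eq_one n⟩, rfl⟩
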